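/- arXiv:1004.2269 — 2 statements merged into one kernel-verified Lean document; each statement's English description precedes it below -/
import Mathlib

section
/- For every positive integer m, ∏_{r=1}^{2m+1} h(r) = (2m+1) · C(2m, m) · ∏_{r=1}^{m} h(r), where C(2m, m) is the central binomial coefficient. -/
/-!
Odd `r` have no factor `2`, so `h r = r`. Since `g (2s / 2^(i+1)) = g (s / 2^i)`, the denominator
of `h (2s)` is `g s = s` times that of `h s`, whence `h (2s) = 2 h(s) / s`. Passing from `m` to
`m + 1` therefore multiplies the left side by `2 (2m + 3) h(m+1) / (m + 1)`, and the right side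
by the same factor thanks to `(m + 1) C(2m+2, m+1) = 2 (2m + 1) C(2m, m)`.
-/

open Finset

/-- `g x = x` if `x` is an integer (for positive rationals: a positive integer), else `1`. -/
def g (x : ℚ) : ℚ := if x.den = 1 then x else 1

/-- `h r = r / (g(r/2) * g(r/4) * g(r/8) * ...)`; the product is finite since
`g (r / 2^i) = 1` for all `i > r`. -/
def h (r : ℕ) : ℚ := (r : ℚ) / ∏ i ∈ Finset.Icc 1 r, g ((r : ℚ) / 2 ^ i)

/-- `f (2^k * ℓ) = ℓ^(1-k)` for `ℓ` odd, i.e. `f r = odd(r) ^ (1 - v₂(r))`. -/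
def f (r : ℕ) : ℚ := (ordCompl[2] r : ℚ) ^ ((1 : ℤ) - padicValNat 2 r)

lemma g_natCast (n : ℕ) : g n = n := by
  simp [g]

lemma g_natCast_div {a b : ℕ} (hb : b ≠ 0) :
    g (a / b) = if b ∣ a then ((a / b : ℕ) : ℚ) else 1 := by
  simp only [g, Rat.den_div_natCast_eq_one_iff a b hb]
  split_ifs with hdvd
  · rw [Nat.cast_div hdvd (by exact_mod_cast hb)]
  · rfl

lemma g_natCast_div_two_pow_of_not_dvd {r i : ℕ} (hdvd : ¬ 2 ^ i ∣ r) :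
    g ((r : ℚ) / 2 ^ i) = 1 := by
  simpa [hdvd] using g_natCast_div (a := r) (b := 2 ^ i) (by positivity)

lemma prod_g_div_two_pow_eq_of_le {r n : ℕ} (hr : 0 < r) (hrn : r ≤ n) :
    ∏ i ∈ Icc 1 n, g ((r : ℚ) / 2 ^ i) = ∏ i ∈ Icc 1 r, g ((r : ℚ) / 2 ^ i) := by
  refine (prod_subset (Icc_subset_Icc_right hrn) fun i hin hir => ?_).symm
  apply g_natCast_div_two_pow_of_not_dvd
  have hri : r < i := by simp only [mem_Icc] at hin hir; omega
  exact fun hdvd => (Nat.le_of_dvd hr hdvd).not_gt (hri.trans i.lt_two_pow_self)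

lemma prod_g_two_mul_div_two_pow (s n : ℕ) :
    ∏ i ∈ Icc 1 (n + 1), g (((2 * s : ℕ) : ℚ) / 2 ^ i)
      = g s * ∏ i ∈ Icc 1 n, g ((s : ℚ) / 2 ^ i) := by
  induction n with
  | zero => simp
  | succ n ih =>
    rw [prod_Icc_succ_top (by omega), ih, prod_Icc_succ_top (by omega), mul_assoc]
    congr 3
    push_cast
    ring

lemma h_of_odd {r : ℕ} (hr : Odd r) : h r = r := by
  rw [h, prod_eq_one, div_one]
  intro i hi
  apply g_natCast_div_two_pow_of_not_dvd
  have hi : i ≠ 0 := by simp only [mem_Icc] at hi; omega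
  exact fun hdvd => Nat.not_even_iff_odd.mpr hr
    (even_iff_two_dvd.mpr ((dvd_pow_self 2 hi).trans hdvd))

lemma h_two_mul (s : ℕ) : h (2 * s) = 2 * h s / s := by
  rcases Nat.eq_zero_or_pos s with rfl | hs
  · simp [h]
  have hdenom : ∏ i ∈ Icc 1 (2 * s), g (((2 * s : ℕ) : ℚ) / 2 ^ i)
      = s * ∏ i ∈ Icc 1 s, g ((s : ℚ) / 2 ^ i) := by
    have := prod_g_two_mul_div_two_pow s (2 * s - 1)
    rwa [Nat.sub_add_cancel (by omega), g_natCast,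
      prod_g_div_two_pow_eq_of_le hs (by omega)] at this
  rw [h, hdenom, h]
  push_cast
  ring

theorem prod_h_odd_general (m : ℕ) :
    ∏ r ∈ Finset.Icc 1 (2 * m + 1), h r
      = ((2 * m + 1 : ℕ) : ℚ) * ((2 * m).choose m : ℚ) * ∏ r ∈ Finset.Icc 1 m, h r := by
  induction m with
  | zero => simp [h_of_odd odd_one]
  | succ m ih =>
    have hbinom : ((m + 1 : ℕ) : ℚ) * ((2 * (m + 1)).choose (m + 1) : ℕ)
        = 2 * (2 * m + 1 : ℕ) * ((2 * m).choose m : ℕ) := by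
      exact_mod_cast Nat.succ_mul_centralBinom_succ m
    rw [show 2 * (m + 1) + 1 = 2 * m + 1 + 1 + 1 by ring,
      prod_Icc_succ_top (show 1 ≤ 2 * m + 1 + 1 + 1 by omega),
      prod_Icc_succ_top (show 1 ≤ 2 * m + 1 + 1 by omega),
      prod_Icc_succ_top (show 1 ≤ m + 1 by omega), ih,
      show 2 * m + 1 + 1 = 2 * (m + 1) by ring, h_two_mul, h_of_odd (odd_two_mul_add_one _)]
    field_simp
    linear_combination (-1 : ℚ) * (∏ r ∈ Finset.Icc 1 m, h r) * h (m + 1) * hbinom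

theorem prod_h_odd (m : ℕ) (hm : 0 < m) :
    ∏ r ∈ Finset.Icc 1 (2 * m + 1), h r
      = ((2 * m + 1 : ℕ) : ℚ) * ((2 * m).choose m : ℚ) * ∏ r ∈ Finset.Icc 1 m, h r :=
  prod_h_odd_general m
end

section
/- For every positive integer n, ∏_{r=1}^{n} h(r) ≤ n^{log₂ n} · 4^n, where log₂ denotes the logarithm to base 2 and n^{log₂ n} is the real power. -/
open Finset

/-!
Since `∏_{r ≤ n} g (r / 2^i) = ⌊n / 2^i⌋!`, the product of the `h r` is `n! / D n` with
`D n = ∏_{i ≥ 1} ⌊n / 2^i⌋! = ⌊n/2⌋! · D ⌊n/2⌋` (`dyadicFactorialProd`). Bounding the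
binomial coefficient by `2^n` gives `n! ≤ 2^n · ⌊n/2⌋! · ⌈n/2⌉! ≤ 2^n · n · ⌊n/2⌋!²`, and
induction on `n` then yields `n! ≤ n^⌊log₂ n⌋ · 4^n · D n`.
-/

open scoped Nat

lemma g_natCast_div_two_pow (a i : ℕ) :
    g ((a : ℚ) / 2 ^ i) = if 2 ^ i ∣ a then ((a / 2 ^ i : ℕ) : ℚ) else 1 := by
  have hden := Rat.den_div_natCast_eq_one_iff a (2 ^ i) (by positivity)
  push_cast at hden
  unfold g
  split_ifs with h₁ h₂ h₂
  · rw [Rat.natCast_div a _ h₂]; push_cast; rfl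
  · exact absurd (hden.mp h₁) h₂
  · exact absurd (hden.mpr h₂) h₁
  · rfl

lemma prod_Icc_g_natCast_div_two_pow (n i : ℕ) :
    ∏ r ∈ Icc 1 n, g ((r : ℚ) / 2 ^ i) = ((n / 2 ^ i)! : ℚ) := by
  induction n with
  | zero => simp
  | succ n ih =>
    rw [prod_Icc_succ_top (by omega), ih, g_natCast_div_two_pow, Nat.succ_div]
    split_ifs with hdvd
    · rw [Nat.factorial_succ]; push_cast; ring
    · simp

lemma h_eq_div_prod_Icc {n r : ℕ} (hr : r ∈ Icc 1 n) :
    h r = r / ∏ i ∈ Icc 1 n, g ((r : ℚ) / 2 ^ i) := by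
  rw [mem_Icc] at hr
  rw [h, prod_subset (Icc_subset_Icc_right hr.2)]
  intro i hin hir
  simp only [mem_Icc] at hin hir
  have : r < 2 ^ i := Nat.lt_two_pow_self.trans_le (Nat.pow_le_pow_right two_pos (by omega))
  rw [g_natCast_div_two_pow, if_neg (Nat.not_dvd_of_pos_of_lt (by omega) this)]

def dyadicFactorialProd (n : ℕ) : ℕ := ∏ i ∈ Icc 1 n, (n / 2 ^ i)!

lemma prod_h_eq_factorial_div (n : ℕ) :
    ∏ r ∈ Icc 1 n, h r = (n ! : ℚ) / dyadicFactorialProd n := by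
  rw [prod_congr rfl fun r hr => h_eq_div_prod_Icc hr, prod_div_distrib, prod_comm,
    prod_congr rfl fun i _ => prod_Icc_g_natCast_div_two_pow n i, dyadicFactorialProd,
    ← Ico_add_one_right_eq_Icc, ← prod_Ico_id_eq_factorial]
  push_cast
  rfl

lemma prod_Icc_factorial_div_two_pow_of_le {n N : ℕ} (hN : n ≤ N) :
    ∏ i ∈ Icc 1 N, (n / 2 ^ i)! = dyadicFactorialProd n := by
  refine (prod_subset (Icc_subset_Icc_right hN) fun i hiN hin => ?_).symm
  simp only [mem_Icc] at hiN hin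
  have : n < 2 ^ i := Nat.lt_two_pow_self.trans_le (Nat.pow_le_pow_right two_pos (by omega))
  rw [Nat.div_eq_of_lt this, Nat.factorial_zero]

lemma dyadicFactorialProd_eq (n : ℕ) :
    dyadicFactorialProd n = (n / 2)! * dyadicFactorialProd (n / 2) := by
  rw [← prod_Icc_factorial_div_two_pow_of_le (Nat.le_add_right n 1), Icc_eq_cons_Ioc (by omega),
    prod_cons, ← Icc_add_one_left_eq_Ioc, ← map_add_right_Icc, prod_map,
    ← prod_Icc_factorial_div_two_pow_of_le (Nat.div_le_self n 2)]
  congr 1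
  refine prod_congr rfl fun i _ => ?_
  rw [Nat.div_div_eq_div_mul, ← pow_succ']
  rfl

lemma factorial_le_two_pow_mul_factorial_mul_factorial_sub {n k : ℕ} (hk : k ≤ n) :
    n ! ≤ 2 ^ n * k ! * (n - k)! := by
  rw [← Nat.choose_mul_factorial_mul_factorial hk]
  gcongr
  exact Nat.choose_le_two_pow n k

lemma factorial_sub_half_le (n : ℕ) (hn : 1 ≤ n) : (n - n / 2)! ≤ n * (n / 2)! :=
  calc (n - n / 2)! ≤ (n / 2 + 1)! := Nat.factorial_le (by omega)
    _ = (n / 2 + 1) * (n / 2)! := Nat.factorial_succ _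
    _ ≤ n * (n / 2)! := by gcongr; omega

lemma two_pow_mul_four_pow_half_le (n : ℕ) : 2 ^ n * 4 ^ (n / 2) ≤ 4 ^ n := by
  rw [show (4 : ℕ) = 2 ^ 2 by rfl, ← pow_mul, ← pow_mul, ← pow_add]
  exact Nat.pow_le_pow_right two_pos (by omega)

lemma factorial_le_pow_log_mul_four_pow_mul_dyadicFactorialProd (n : ℕ) :
    n ! ≤ n ^ Nat.log 2 n * 4 ^ n * dyadicFactorialProd n := by
  induction n using Nat.strong_induction_on with
  | _ n ih =>
  obtain hn | hn := lt_or_ge n 2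
  · interval_cases n <;> decide
  set m := n / 2 with hm
  have hlog : Nat.log 2 n = Nat.log 2 m + 1 := by
    have := Nat.log_pos (b := 2) one_lt_two hn
    rw [hm, Nat.log_div_base]
    omega
  calc n ! ≤ 2 ^ n * m ! * (n - m)! :=
        factorial_le_two_pow_mul_factorial_mul_factorial_sub (Nat.div_le_self n 2)
    _ ≤ 2 ^ n * (m ^ Nat.log 2 m * 4 ^ m * dyadicFactorialProd m) * (n * m !) := by
      gcongr
      · exact ih m (by omega)
      · exact factorial_sub_half_le n (by omega)
    _ = (2 ^ n * 4 ^ m) * (n * m ^ Nat.log 2 m) * (m ! * dyadicFactorialProd m) := by ring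
    _ ≤ 4 ^ n * (n * n ^ Nat.log 2 m) * (m ! * dyadicFactorialProd m) := by
      gcongr
      · exact two_pow_mul_four_pow_half_le n
      · omega
    _ = n ^ Nat.log 2 n * 4 ^ n * dyadicFactorialProd n := by
      rw [hlog, dyadicFactorialProd_eq n, pow_succ]
      ring

theorem prod_h_le_rpow (n : ℕ) (hn : 0 < n) :
    ((∏ r ∈ Finset.Icc 1 n, h r : ℚ) : ℝ) ≤ (n : ℝ) ^ (Real.logb 2 n) * 4 ^ n := by
  have hD : (0 : ℝ) < dyadicFactorialProd n :=
    Nat.cast_pos.mpr (prod_pos fun i _ => Nat.factorial_pos _)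
  have hexp : (n : ℝ) ^ Nat.log 2 n ≤ (n : ℝ) ^ Real.logb 2 n := by
    rw [← Real.rpow_natCast]
    exact Real.rpow_le_rpow_of_exponent_le (by exact_mod_cast hn) (Real.natLog_le_logb n 2)
  rw [prod_h_eq_factorial_div]
  push_cast
  rw [div_le_iff₀ hD]
  calc (n ! : ℝ) ≤ n ^ Nat.log 2 n * 4 ^ n * dyadicFactorialProd n := by
        exact_mod_cast factorial_le_pow_log_mul_four_pow_mul_dyadicFactorialProd n
    _ ≤ n ^ Real.logb 2 n * 4 ^ n * dyadicFactorialProd n := by gcongr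
end
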